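/- Let A₁,…,A_k be proper open convex sets in R^{n₁},…,R^{n_k} and let p = (p₁,…,p_k) be a point of the product. Let T_pB(1) ⊆ R^{n₁+⋯+n_k} be the unit ball of the Finsler norm F_{A₁×⋯×A_k}(p,·) and T_{pᵢ}B(1) ⊆ R^{nᵢ} the unit ball of F_{Aᵢ}(pᵢ,·). Then (1/k^{n₁+⋯+n_k}) Π_{i=1}^k Leb_{nᵢ}(T_{pᵢ}B(1)) ≤ Leb_{n₁+⋯+n_k}(T_pB(1)) ≤ Π_{i=1}^k Leb_{nᵢ}(T_{pᵢ}B(1)), where Leb_d denotes d-dimensional Lebesgue measure. -/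

import Mathlib

open scoped ENNReal
open MeasureTheory

noncomputable section

/-- Exit time of the open convex set `A` from `p` in direction `v`:
`sup {t > 0 : p + t • v ∈ A}` in `ℝ≥0∞` (so it is `∞` when the ray stays in `A`). -/
def exitTime {V : Type*} [AddCommGroup V] [Module ℝ V] (A : Set V) (p v : V) : ℝ≥0∞ :=
  ⨆ t ∈ {t : ℝ | 0 < t ∧ p + t • v ∈ A}, ENNReal.ofReal t

/-- The Hilbert–Finsler norm `F_A(p,v) = (1/2)(1/t⁺ + 1/t⁻)`, with `1/∞ = 0`. -/
def finsler {V : Type*} [AddCommGroup V] [Module ℝ V] (A : Set V) (p v : V) : ℝ :=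
  ((exitTime A p v)⁻¹ + (exitTime A p (-v))⁻¹).toReal / 2

/-- `A` contains no affine line (properness). -/
def LineFree {V : Type*} [AddCommGroup V] [Module ℝ V] (A : Set V) : Prop :=
  ¬ ∃ p v : V, v ≠ 0 ∧ ∀ t : ℝ, p + t • v ∈ A

open Classical in
/-- The Hilbert distance of `A`, written via the exit times `t⁺ = exitTime A p (q-p)`,
`t⁻ = exitTime A p (p-q)`: the cross-ratio of `(a,p,q,b)` equals
`(t⁺/(t⁺-1)) · ((t⁻+1)/t⁻)`, factors involving a boundary point at infinity being `1`. -/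
def hilbertDist {V : Type*} [AddCommGroup V] [Module ℝ V] (A : Set V) (p q : V) : ℝ :=
  if p = q then 0 else
    (1 / 2) * Real.log
      ((if exitTime A p (q - p) = ∞ then 1 else
          (exitTime A p (q - p)).toReal / ((exitTime A p (q - p)).toReal - 1)) *
       (if exitTime A p (p - q) = ∞ then 1 else
          ((exitTime A p (p - q)).toReal + 1) / (exitTime A p (p - q)).toReal))

/-- Open ball of the Hilbert distance. -/
def hilbertBall {V : Type*} [AddCommGroup V] [Module ℝ V] (A : Set V) (p : V) (R : ℝ) :
    Set V :=
  {q ∈ A | hilbertDist A p q < R}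

/-!
A vector `v` at `p ∈ A₁ × ⋯ × A_k` leaves the product exactly when its first component
leaves its factor, so the exit times of the product are the minima of those of the factors
(this is where convexity enters). Hence the Finsler norm of the product lies between the
maximum and the sum of the norms of the factors, and its unit ball is squeezed between the
product of the unit balls of the factors and the same product scaled by `1/k`. The Finsler
norm being positively homogeneous, scaling by `1/k` multiplies the volume by
`k^{-(n₁+⋯+n_k)}`.
-/

open scoped ENNReal Pointwise
open MeasureTheory Set

section VectorSpace

variable {V : Type*} [AddCommGroup V] [Module ℝ V]

theorem exitTime_pos [TopologicalSpace V] [ContinuousAdd V] [ContinuousSMul ℝ V]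
    {A : Set V} (hA : IsOpen A) {p : V} (hp : p ∈ A) (v : V) : 0 < exitTime A p v := by
  have hcont : Continuous fun t : ℝ => p + t • v := by fun_prop
  have hnear : ∀ᶠ t in nhdsWithin (0 : ℝ) (Ioi 0), p + t • v ∈ A :=
    nhdsWithin_le_nhds (hcont.continuousAt.preimage_mem_nhds (by simpa using hA.mem_nhds hp))
  obtain ⟨t, htA, ht0⟩ := (hnear.and self_mem_nhdsWithin).exists
  exact (ENNReal.ofReal_pos.2 ht0).trans_le (le_biSup (fun t => ENNReal.ofReal t) ⟨ht0, htA⟩)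

theorem inv_exitTime_ne_top [TopologicalSpace V] [ContinuousAdd V] [ContinuousSMul ℝ V]
    {A : Set V} (hA : IsOpen A) {p : V} (hp : p ∈ A) (v : V) : (exitTime A p v)⁻¹ ≠ ∞ :=
  ENNReal.inv_ne_top.2 (exitTime_pos hA hp v).ne'

theorem exitTime_smul_le (A : Set V) (p v : V) {c : ℝ} (hc : 0 < c) :
    exitTime A p (c • v) ≤ ENNReal.ofReal c⁻¹ * exitTime A p v := by
  refine iSup₂_le fun t ⟨ht0, htA⟩ => ?_
  rw [smul_smul] at htA
  calc ENNReal.ofReal t = ENNReal.ofReal c⁻¹ * ENNReal.ofReal (t * c) := by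
        rw [← ENNReal.ofReal_mul (by positivity), mul_comm t, inv_mul_cancel_left₀ hc.ne']
    _ ≤ ENNReal.ofReal c⁻¹ * exitTime A p v := by
        gcongr
        exact le_biSup (fun s => ENNReal.ofReal s) ⟨mul_pos ht0 hc, htA⟩

theorem exitTime_smul (A : Set V) (p v : V) {c : ℝ} (hc : 0 < c) :
    exitTime A p (c • v) = ENNReal.ofReal c⁻¹ * exitTime A p v := by
  refine le_antisymm (exitTime_smul_le A p v hc) ?_
  have h := exitTime_smul_le A p (c • v) (inv_pos.2 hc)
  rw [smul_smul, inv_mul_cancel₀ hc.ne', one_smul, inv_inv] at h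
  calc ENNReal.ofReal c⁻¹ * exitTime A p v
      ≤ ENNReal.ofReal c⁻¹ * (ENNReal.ofReal c * exitTime A p (c • v)) := by gcongr
    _ = exitTime A p (c • v) := by
        rw [← mul_assoc, ← ENNReal.ofReal_mul (by positivity), inv_mul_cancel₀ hc.ne',
          ENNReal.ofReal_one, one_mul]

theorem finsler_smul (A : Set V) (p v : V) {c : ℝ} (hc : 0 < c) :
    finsler A p (c • v) = c * finsler A p v := by
  have hne : ENNReal.ofReal c⁻¹ ≠ 0 := by simp [hc]
  have hnt : ENNReal.ofReal c⁻¹ ≠ ∞ := ENNReal.ofReal_ne_top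
  rw [finsler, finsler, ← smul_neg, exitTime_smul A p v hc, exitTime_smul A p (-v) hc,
    ENNReal.mul_inv (.inl hne) (.inl hnt), ENNReal.mul_inv (.inl hne) (.inl hnt),
    ENNReal.ofReal_inv_of_pos hc, inv_inv, ← mul_add, ENNReal.toReal_mul,
    ENNReal.toReal_ofReal hc.le, mul_div_assoc]

theorem setOf_finsler_lt_eq_smul (A : Set V) (p : V) {r : ℝ} (hr : 0 < r) :
    {v | finsler A p v < r} = r • {v | finsler A p v < 1} := by
  ext v
  rw [mem_smul_set_iff_inv_smul_mem₀ hr.ne', mem_ofPred, mem_ofPred,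
    finsler_smul A p v (inv_pos.2 hr), inv_mul_lt_iff₀ hr, mul_one]

theorem add_smul_mem_of_ofReal_lt_exitTime {A : Set V} (hA : Convex ℝ A) {p : V} (hp : p ∈ A)
    {v : V} {r : ℝ} (hr : 0 ≤ r) (hlt : ENNReal.ofReal r < exitTime A p v) :
    p + r • v ∈ A := by
  simp only [exitTime, lt_iSup_iff, mem_ofPred_eq] at hlt
  obtain ⟨t, ⟨ht0, htA⟩, hrt⟩ := hlt
  have hrt : r < t := (ENNReal.ofReal_lt_ofReal_iff ht0).1 hrt
  have hmem := hA.add_smul_mem hp htA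
    (t := r / t) ⟨by positivity, (div_le_one ht0).2 hrt.le⟩
  rwa [smul_smul, div_mul_cancel₀ _ ht0.ne'] at hmem

end VectorSpace

theorem MeasureTheory.Measure.setOf_finsler_lt {E : Type*} [NormedAddCommGroup E]
    [NormedSpace ℝ E] [MeasurableSpace E] [BorelSpace E] [FiniteDimensional ℝ E]
    (μ : Measure E) [μ.IsAddHaarMeasure] (A : Set E) (p : E) {r : ℝ} (hr : 0 < r) :
    μ {v | finsler A p v < r} =
      ENNReal.ofReal r ^ Module.finrank ℝ E * μ {v | finsler A p v < 1} := by
  rw [setOf_finsler_lt_eq_smul A p hr, μ.addHaar_smul_of_nonneg hr.le,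
    ENNReal.ofReal_pow hr.le]

section Pi

variable {ι : Type*} {V : ι → Type*} [∀ i, AddCommGroup (V i)] [∀ i, Module ℝ (V i)]
  {A : ∀ i, Set (V i)} {p : ∀ i, V i}

theorem exitTime_pi_le (v : ∀ i, V i) (i : ι) :
    exitTime (univ.pi A) p v ≤ exitTime (A i) (p i) (v i) :=
  iSup₂_le fun _ ⟨ht0, htA⟩ =>
    le_biSup (fun t => ENNReal.ofReal t) ⟨ht0, htA i (mem_univ i)⟩

theorem exitTime_pi (hconv : ∀ i, Convex ℝ (A i)) (hp : ∀ i, p i ∈ A i) (v : ∀ i, V i) :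
    exitTime (univ.pi A) p v = ⨅ i, exitTime (A i) (p i) (v i) := by
  refine le_antisymm (le_iInf (exitTime_pi_le v)) (ENNReal.le_of_forall_nnreal_lt fun r hr => ?_)
  rcases eq_zero_or_pos r with rfl | hr0
  · exact zero_le
  have hmem : p + (r : ℝ) • v ∈ univ.pi A := fun i _ =>
    add_smul_mem_of_ofReal_lt_exitTime (hconv i) (hp i) r.2
      (by simpa using hr.trans_le (iInf_le _ i))
  rw [← ENNReal.ofReal_coe_nnreal]
  exact le_biSup (fun t => ENNReal.ofReal t) ⟨hr0, hmem⟩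

variable [∀ i, TopologicalSpace (V i)] [∀ i, ContinuousAdd (V i)]
  [∀ i, ContinuousSMul ℝ (V i)]

theorem finsler_le_finsler_pi [Finite ι] (hopen : ∀ i, IsOpen (A i)) (hp : ∀ i, p i ∈ A i)
    (v : ∀ i, V i) (i : ι) :
    finsler (A i) (p i) (v i) ≤ finsler (univ.pi A) p v := by
  have hPo : IsOpen (univ.pi A) := isOpen_set_pi finite_univ fun i _ => hopen i
  have hPp : p ∈ univ.pi A := fun i _ => hp i
  unfold finsler
  gcongr
  · exact ENNReal.add_ne_top.2 ⟨inv_exitTime_ne_top hPo hPp v, inv_exitTime_ne_top hPo hPp (-v)⟩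
  · exact exitTime_pi_le v i
  · exact exitTime_pi_le (-v) i

theorem finsler_pi_le_sum [Fintype ι] (hopen : ∀ i, IsOpen (A i))
    (hconv : ∀ i, Convex ℝ (A i)) (hp : ∀ i, p i ∈ A i) (v : ∀ i, V i) :
    finsler (univ.pi A) p v ≤ ∑ i, finsler (A i) (p i) (v i) := by
  have hfin : ∀ i, (exitTime (A i) (p i) (v i))⁻¹ + (exitTime (A i) (p i) (-v i))⁻¹ ≠ ∞ :=
    fun i => ENNReal.add_ne_top.2
      ⟨inv_exitTime_ne_top (hopen i) (hp i) _, inv_exitTime_ne_top (hopen i) (hp i) _⟩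
  have hsup_le_sum : ∀ w : ∀ i, V i,
      ⨆ i, (exitTime (A i) (p i) (w i))⁻¹ ≤ ∑ i, (exitTime (A i) (p i) (w i))⁻¹ :=
    fun w => iSup_le fun i =>
      Finset.single_le_sum (f := fun j => (exitTime (A j) (p j) (w j))⁻¹) (fun _ _ => zero_le)
        (Finset.mem_univ i)
  unfold finsler
  rw [← Finset.sum_div, ← ENNReal.toReal_sum fun i _ => hfin i]
  gcongr
  · exact ENNReal.sum_ne_top.2 fun i _ => hfin i
  · rw [exitTime_pi hconv hp, exitTime_pi hconv hp, ENNReal.inv_iInf, ENNReal.inv_iInf,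
      Finset.sum_add_distrib]
    exact add_le_add (hsup_le_sum v) (hsup_le_sum (-v))

theorem pi_setOf_finsler_lt_inv_card_subset [Fintype ι] (hopen : ∀ i, IsOpen (A i))
    (hconv : ∀ i, Convex ℝ (A i)) (hp : ∀ i, p i ∈ A i) :
    univ.pi (fun i => {w | finsler (A i) (p i) w < (Fintype.card ι : ℝ)⁻¹}) ⊆
      {v | finsler (univ.pi A) p v < 1} := by
  intro v hv
  refine (finsler_pi_le_sum hopen hconv hp v).trans_lt ?_
  rcases isEmpty_or_nonempty ι with hι | hι
  · simp
  calc ∑ i, finsler (A i) (p i) (v i) < ∑ _i : ι, (Fintype.card ι : ℝ)⁻¹ :=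
        Finset.sum_lt_sum_of_nonempty Finset.univ_nonempty fun i _ => hv i (mem_univ i)
    _ = 1 := by simp

end Pi

theorem volume_unit_finsler_ball_pi_general {k : ℕ} {n : Fin k → ℕ}
    (A : ∀ i, Set (EuclideanSpace ℝ (Fin (n i))))
    (hopen : ∀ i, IsOpen (A i)) (hconv : ∀ i, Convex ℝ (A i))
    (p : ∀ i, EuclideanSpace ℝ (Fin (n i))) (hp : ∀ i, p i ∈ A i) :
    ((k : ℝ≥0∞) ^ (∑ i, n i))⁻¹ *
        ∏ i, volume {v : EuclideanSpace ℝ (Fin (n i)) | finsler (A i) (p i) v < 1} ≤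
      volume {v : ∀ i, EuclideanSpace ℝ (Fin (n i)) | finsler (Set.univ.pi A) p v < 1} ∧
    volume {v : ∀ i, EuclideanSpace ℝ (Fin (n i)) | finsler (Set.univ.pi A) p v < 1} ≤
      ∏ i, volume {v : EuclideanSpace ℝ (Fin (n i)) | finsler (A i) (p i) v < 1} := by
  have hscale : ((k : ℝ≥0∞) ^ (∑ i, n i))⁻¹ *
      ∏ i, volume {v : EuclideanSpace ℝ (Fin (n i)) | finsler (A i) (p i) v < 1} =
      ∏ i, volume {v : EuclideanSpace ℝ (Fin (n i)) | finsler (A i) (p i) v < (k : ℝ)⁻¹} := by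
    rcases k.eq_zero_or_pos with rfl | hk
    · simp
    simp_rw [volume.setOf_finsler_lt _ _ (inv_pos.2 (Nat.cast_pos.2 hk)),
      finrank_euclideanSpace_fin, Finset.prod_mul_distrib, Finset.prod_pow_eq_pow_sum,
      ENNReal.ofReal_inv_of_pos (Nat.cast_pos.2 hk), ENNReal.ofReal_natCast, ENNReal.inv_pow]
  constructor
  · calc _ = _ := hscale
      _ = volume (univ.pi fun i =>
            {v : EuclideanSpace ℝ (Fin (n i)) | finsler (A i) (p i) v < (k : ℝ)⁻¹}) :=
          (volume_pi_pi _).symm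
      _ ≤ _ := measure_mono <| by
          simpa using pi_setOf_finsler_lt_inv_card_subset hopen hconv hp
  · calc _ ≤ volume (univ.pi fun i =>
            {v : EuclideanSpace ℝ (Fin (n i)) | finsler (A i) (p i) v < 1}) :=
          measure_mono fun v hv i _ => (finsler_le_finsler_pi hopen hp v i).trans_lt hv
      _ = _ := volume_pi_pi _

/-- volume comparison for the unit Finsler balls of a product:
`k^{-(n₁+⋯+n_k)} Π Leb(Bᵢ) ≤ Leb(B) ≤ Π Leb(Bᵢ)`. -/
theorem volume_unit_finsler_ball_pi {k : ℕ} {n : Fin k → ℕ}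
    (A : ∀ i, Set (EuclideanSpace ℝ (Fin (n i))))
    (hopen : ∀ i, IsOpen (A i)) (hconv : ∀ i, Convex ℝ (A i))
    (hline : ∀ i, LineFree (A i))
    (p : ∀ i, EuclideanSpace ℝ (Fin (n i))) (hp : ∀ i, p i ∈ A i) :
    ((k : ℝ≥0∞) ^ (∑ i, n i))⁻¹ *
        ∏ i, volume {v : EuclideanSpace ℝ (Fin (n i)) | finsler (A i) (p i) v < 1} ≤
      volume {v : ∀ i, EuclideanSpace ℝ (Fin (n i)) | finsler (Set.univ.pi A) p v < 1} ∧
    volume {v : ∀ i, EuclideanSpace ℝ (Fin (n i)) | finsler (Set.univ.pi A) p v < 1} ≤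
      ∏ i, volume {v : EuclideanSpace ℝ (Fin (n i)) | finsler (A i) (p i) v < 1} :=
  volume_unit_finsler_ball_pi_general A hopen hconv p hp
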